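/- For any symmetric matrices P(k), P(k+1) ∈ ℝ^{n×n} and any k ∈ {0,…,K}, the solution x of the mean-field stochastic difference equation satisfies the one-step identity: E[(x(k+1)−E x(k+1))ᵀ P(k+1) (x(k+1)−E x(k+1))] − E[(x(k)−E x(k))ᵀ P(k) (x(k)−E x(k))] = E{ (x(k)−E x(k))ᵀ [A(k)ᵀP(k+1)A(k)+C(k)ᵀP(k+1)C(k)−P(k)] (x(k)−E x(k)) + 2(x(k)−E x(k))ᵀ[A(k)ᵀP(k+1)B(k)+C(k)ᵀP(k+1)D(k)](ν(k)−E ν(k)) + (ν(k)−E ν(k))ᵀ[B(k)ᵀP(k+1)B(k)+D(k)ᵀP(k+1)D(k)](ν(k)−E ν(k)) } + (E x(k))ᵀ ℂ(k)ᵀP(k+1)ℂ(k) (E x(k)) + 2 (E x(k))ᵀ ℂ(k)ᵀP(k+1)𝔻(k) (E ν(k)) + (E ν(k))ᵀ 𝔻(k)ᵀP(k+1)𝔻(k) (E ν(k)). -/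

import Mathlib

open MeasureTheory ProbabilityTheory Matrix Finset

/-- The mean-field stochastic state recursion
`x(k+1) = A x + Ã E x + B ν + B̃ E ν + (C x + C̃ E x + D ν + D̃ E ν)·ω(k)`. -/
noncomputable def mfState {Ω : Type*} [MeasurableSpace Ω] (μ : Measure Ω) {n l : ℕ}
    (A At C Ct : ℕ → Matrix (Fin n) (Fin n) ℝ)
    (B Bt D Dt : ℕ → Matrix (Fin n) (Fin l) ℝ)
    (W : ℕ → Ω → ℝ) (x0 : Fin n → ℝ) (ν : ℕ → Ω → Fin l → ℝ) :
    ℕ → Ω → Fin n → ℝ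
  | 0 => fun _ => x0
  | (k+1) => fun a =>
      A k *ᵥ mfState μ A At C Ct B Bt D Dt W x0 ν k a
      + At k *ᵥ (∫ b, mfState μ A At C Ct B Bt D Dt W x0 ν k b ∂μ)
      + B k *ᵥ ν k a + Bt k *ᵥ (∫ b, ν k b ∂μ)
      + W k a • (C k *ᵥ mfState μ A At C Ct B Bt D Dt W x0 ν k a
          + Ct k *ᵥ (∫ b, mfState μ A At C Ct B Bt D Dt W x0 ν k b ∂μ)
          + D k *ᵥ ν k a + Dt k *ᵥ (∫ b, ν k b ∂μ))

/-- Admissibility of a disturbance: square integrability and independence of the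
noise `ω(k)` from the pair `(x(k), ν(k))`. -/
def mfAdmissible {Ω : Type*} [MeasurableSpace Ω] (μ : Measure Ω) {n l : ℕ} (K : ℕ)
    (W : ℕ → Ω → ℝ) (x : ℕ → Ω → Fin n → ℝ) (ν : ℕ → Ω → Fin l → ℝ) : Prop :=
  (∀ k ≤ K, MemLp (ν k) 2 μ) ∧
  (∀ k ≤ K, IndepFun (fun a => (x k a, ν k a)) (W k) μ)

/-!
With `y = x(k) - E x(k)`, `w = ν(k) - E ν(k)` and `m = ℂ(k) E x(k) + 𝔻(k) E ν(k)`, the recursion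
gives `x(k+1) - E x(k+1) = (A y + B w) + ω(k) (C y + D w + m)`. As `ω(k)` is independent of
`(x(k), ν(k))` with `E ω = 0` and `E ω² = 1`, the second moment of this under `P(k+1)` splits as
`E[(A y + B w)ᵀ P (A y + B w)] + E[(C y + D w)ᵀ P (C y + D w)] + mᵀ P m`, the cross term with `m`
vanishing because `y` and `w` are centred. Expanding the quadratic forms, with `P(k+1)` symmetric,
gives the identity. The same independence makes every `x(k)` square integrable, by induction.
-/

namespace Matrix

variable {ι κ ι' κ' R : Type*} [Fintype ι] [Fintype κ] [Fintype ι'] [Fintype κ'] [CommRing R]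

theorem add_dotProduct_mulVec_add (P : Matrix ι ι R) (u v : ι → R) :
    (u + v) ⬝ᵥ P *ᵥ (u + v)
      = u ⬝ᵥ P *ᵥ u + (u ⬝ᵥ P *ᵥ v + v ⬝ᵥ P *ᵥ u) + v ⬝ᵥ P *ᵥ v := by
  simp only [mulVec_add, dotProduct_add, add_dotProduct]
  ring

theorem mulVec_dotProduct_mulVec_mulVec (M : Matrix ι κ R) (P : Matrix ι ι' R)
    (N : Matrix ι' κ' R) (a : κ → R) (b : κ' → R) :
    (M *ᵥ a) ⬝ᵥ P *ᵥ (N *ᵥ b) = a ⬝ᵥ (Mᵀ * P * N) *ᵥ b := by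
  rw [← mulVec_mulVec, ← mulVec_mulVec, dotProduct_mulVec a, vecMul_transpose]

theorem IsSymm.dotProduct_mulVec_comm {P : Matrix ι ι R} (hP : P.IsSymm) (u v : ι → R) :
    u ⬝ᵥ P *ᵥ v = v ⬝ᵥ P *ᵥ u := by
  rw [dotProduct_mulVec, ← mulVec_transpose, hP.eq, dotProduct_comm]

theorem IsSymm.mulVec_add_mulVec_dotProduct_mulVec {P : Matrix ι ι R} (hP : P.IsSymm)
    (M : Matrix ι κ R) (N : Matrix ι κ' R) (y : κ → R) (w : κ' → R) :
    (M *ᵥ y + N *ᵥ w) ⬝ᵥ P *ᵥ (M *ᵥ y + N *ᵥ w)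
      = y ⬝ᵥ (Mᵀ * P * M) *ᵥ y + 2 * (y ⬝ᵥ (Mᵀ * P * N) *ᵥ w) + w ⬝ᵥ (Nᵀ * P * N) *ᵥ w := by
  rw [add_dotProduct_mulVec_add, hP.dotProduct_mulVec_comm (N *ᵥ w),
    mulVec_dotProduct_mulVec_mulVec, mulVec_dotProduct_mulVec_mulVec,
    mulVec_dotProduct_mulVec_mulVec]
  ring

end Matrix

section Integration

variable {Ω ι κ : Type*} [Fintype ι] [Fintype κ] [MeasurableSpace Ω] {μ : Measure Ω}
  {p : ENNReal}

theorem MeasureTheory.MemLp.mulVec (M : Matrix ι κ ℝ) {f : Ω → κ → ℝ} (hf : MemLp f p μ) :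
    MemLp (fun a => M *ᵥ f a) p μ :=
  M.mulVecLin.toContinuousLinearMap.comp_memLp' hf

theorem MeasureTheory.Integrable.mulVec (M : Matrix ι κ ℝ) {f : Ω → κ → ℝ}
    (hf : Integrable f μ) : Integrable (fun a => M *ᵥ f a) μ :=
  M.mulVecLin.toContinuousLinearMap.integrable_comp hf

theorem integral_mulVec (M : Matrix ι κ ℝ) {f : Ω → κ → ℝ} (hf : Integrable f μ) :
    ∫ a, M *ᵥ f a ∂μ = M *ᵥ ∫ a, f a ∂μ :=
  M.mulVecLin.toContinuousLinearMap.integral_comp_comm hf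

theorem integral_const_dotProduct (c : ι → ℝ) {f : Ω → ι → ℝ} (hf : Integrable f μ) :
    ∫ a, c ⬝ᵥ f a ∂μ = c ⬝ᵥ ∫ a, f a ∂μ := by
  simp only [dotProduct]
  rw [integral_finsetSum _ fun i _ => (hf.eval i).const_mul _]
  simp only [integral_const_mul, eval_integral hf.eval]

theorem integral_sub_integral [IsProbabilityMeasure μ] {E : Type*} [NormedAddCommGroup E]
    [NormedSpace ℝ E] [CompleteSpace E] {f : Ω → E} (hf : Integrable f μ) : ∫ a, (f a - ∫ b, f b ∂μ) ∂μ = 0 := by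
  rw [integral_sub hf (integrable_const _), integral_const, probReal_univ, one_smul, sub_self]

theorem MeasureTheory.MemLp.integrable_dotProduct_mulVec (M : Matrix ι κ ℝ)
    {f : Ω → ι → ℝ} {g : Ω → κ → ℝ} (hf : MemLp f 2 μ) (hg : MemLp g 2 μ) :
    Integrable (fun a => f a ⬝ᵥ M *ᵥ g a) μ :=
  integrable_finsetSum _ fun i _ => (hf.eval i).integrable_mul ((hg.mulVec M).eval i)

theorem integral_add_const_dotProduct_mulVec_add_const [IsProbabilityMeasure μ]
    (P : Matrix ι ι ℝ) {h : Ω → ι → ℝ} (hh : MemLp h 2 μ) (h0 : ∫ a, h a ∂μ = 0) (m : ι → ℝ) :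
    ∫ a, (h a + m) ⬝ᵥ P *ᵥ (h a + m) ∂μ = ∫ a, h a ⬝ᵥ P *ᵥ h a ∂μ + m ⬝ᵥ P *ᵥ m := by
  have hh1 : Integrable h μ := hh.integrable one_le_two
  have hcross : ∀ a, h a ⬝ᵥ P *ᵥ m + m ⬝ᵥ P *ᵥ h a = (P *ᵥ m + m ᵥ* P) ⬝ᵥ h a := fun a => by
    rw [dotProduct_comm, dotProduct_mulVec, add_dotProduct]
  have hq : Integrable (fun a => h a ⬝ᵥ P *ᵥ h a) μ := hh.integrable_dotProduct_mulVec P hh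
  have hc : Integrable (fun a => (P *ᵥ m + m ᵥ* P) ⬝ᵥ h a) μ :=
    integrable_finsetSum _ fun i _ => (hh1.eval i).const_mul _
  simp only [add_dotProduct_mulVec_add, hcross]
  rw [integral_add (hq.fun_add hc) (integrable_const _), integral_add hq hc,
    integral_const_dotProduct _ hh1, h0]
  simp

theorem MeasureTheory.MemLp.smul_of_indepFun {E : Type*} [NormedAddCommGroup E]
    [NormedSpace ℝ E] [MeasurableSpace E] [OpensMeasurableSpace E] {ω : Ω → ℝ} {G : Ω → E}
    (hω : MemLp ω 2 μ) (hG : MemLp G 2 μ) (hind : IndepFun G ω μ) :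
    MemLp (fun a => ω a • G a) 2 μ := by
  refine (memLp_two_iff_integrable_sq_norm (hω.1.smul hG.1)).2 ?_
  have hsq : IndepFun (fun a => ‖G a‖ ^ 2) (fun a => ‖ω a‖ ^ 2) μ :=
    hind.comp (measurable_norm.pow_const 2) (measurable_norm.pow_const 2)
  refine (hsq.integrable_mul ((memLp_two_iff_integrable_sq_norm hG.1).1 hG)
    ((memLp_two_iff_integrable_sq_norm hω.1).1 hω)).congr (.of_forall fun a => ?_)
  simp only [Pi.mul_apply, Pi.smul_apply', norm_smul, mul_pow, mul_comm]

theorem integral_dotProduct_mulVec_add_smul_of_indepFun [IsFiniteMeasure μ] (P : Matrix ι ι ℝ)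
    {U G : Ω → ι → ℝ} {ω : Ω → ℝ} (hU : MemLp U 2 μ) (hG : MemLp G 2 μ) (hω : MemLp ω 2 μ)
    (hind : IndepFun (fun a => (U a, G a)) ω μ)
    (hω0 : ∫ a, ω a ∂μ = 0) (hω1 : ∫ a, ω a ^ 2 ∂μ = 1) :
    ∫ a, (U a + ω a • G a) ⬝ᵥ P *ᵥ (U a + ω a • G a) ∂μ
      = ∫ a, U a ⬝ᵥ P *ᵥ U a ∂μ + ∫ a, G a ⬝ᵥ P *ᵥ G a ∂μ := by
  set cross := fun a => U a ⬝ᵥ P *ᵥ G a + G a ⬝ᵥ P *ᵥ U a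
  have hpt : ∀ a, (U a + ω a • G a) ⬝ᵥ P *ᵥ (U a + ω a • G a)
      = U a ⬝ᵥ P *ᵥ U a + ω a * cross a + ω a ^ 2 * (G a ⬝ᵥ P *ᵥ G a) := fun a => by
    simp only [add_dotProduct_mulVec_add, mulVec_smul, dotProduct_smul, smul_dotProduct,
      smul_eq_mul, cross]
    ring
  have hindc : IndepFun ω cross μ :=
    (hind.comp (φ := fun p : (ι → ℝ) × (ι → ℝ) => p.1 ⬝ᵥ P *ᵥ p.2 + p.2 ⬝ᵥ P *ᵥ p.1)
      (by fun_prop) measurable_id).symm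
  have hindq : IndepFun (fun a => ω a ^ 2) (fun a => G a ⬝ᵥ P *ᵥ G a) μ :=
    (hind.comp (φ := fun p : (ι → ℝ) × (ι → ℝ) => p.2 ⬝ᵥ P *ᵥ p.2) (by fun_prop)
      (measurable_id.pow_const 2)).symm
  have hUU := hU.integrable_dotProduct_mulVec P hU
  have hGG := hG.integrable_dotProduct_mulVec P hG
  have hc : Integrable cross μ :=
    (hU.integrable_dotProduct_mulVec P hG).fun_add (hG.integrable_dotProduct_mulVec P hU)
  have hωc : Integrable (fun a => ω a * cross a) μ :=
    hindc.integrable_mul (hω.integrable one_le_two) hc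
  have hωq : Integrable (fun a => ω a ^ 2 * (G a ⬝ᵥ P *ᵥ G a)) μ :=
    hindq.integrable_mul hω.integrable_sq hGG
  simp only [hpt]
  rw [integral_add (hUU.fun_add hωc) hωq, integral_add hUU hωc,
    hindc.integral_fun_mul_eq_mul_integral hω.1 hc.1,
    hindq.integral_fun_mul_eq_mul_integral hω.integrable_sq.1 hGG.1, hω0, hω1]
  ring

end Integration

section Step

variable {Ω ι κ : Type*} [Fintype ι] [Fintype κ] [MeasurableSpace Ω] {μ : Measure Ω}
  [IsProbabilityMeasure μ] (A At C Ct : Matrix ι ι ℝ) (B Bt D Dt : Matrix ι κ ℝ)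
  {ω : Ω → ℝ} {X Z : Ω → ι → ℝ} {V : Ω → κ → ℝ}

theorem integral_eq_of_mf_step (hX : Integrable X μ) (hV : Integrable V μ) (hω : Integrable ω μ)
    (hind : IndepFun (fun a => (X a, V a)) ω μ) (hω0 : ∫ a, ω a ∂μ = 0)
    (hZ : ∀ a, Z a = A *ᵥ X a + At *ᵥ (∫ b, X b ∂μ) + B *ᵥ V a + Bt *ᵥ (∫ b, V b ∂μ)
      + ω a • (C *ᵥ X a + Ct *ᵥ (∫ b, X b ∂μ) + D *ᵥ V a + Dt *ᵥ (∫ b, V b ∂μ))) :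
    ∫ a, Z a ∂μ = (A + At) *ᵥ (∫ b, X b ∂μ) + (B + Bt) *ᵥ (∫ b, V b ∂μ) := by
  set xb := ∫ b, X b ∂μ
  set vb := ∫ b, V b ∂μ
  set G := fun a => C *ᵥ X a + Ct *ᵥ xb + D *ᵥ V a + Dt *ᵥ vb
  have hG : Integrable G μ :=
    (((hX.mulVec C).add (integrable_const _)).add (hV.mulVec D)).add (integrable_const _)
  have hindG : IndepFun ω G μ :=
    (hind.comp (φ := fun p : (ι → ℝ) × (κ → ℝ) => C *ᵥ p.1 + Ct *ᵥ xb + D *ᵥ p.2 + Dt *ᵥ vb)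
      (by fun_prop) measurable_id).symm
  have hnoise : ∫ a, ω a • G a ∂μ = 0 := by
    rw [hindG.integral_fun_smul_eq_smul_integral hω.1 hG.1, hω0, zero_smul]
  have hA := hX.mulVec A
  have hB := hV.mulVec B
  have hc := integrable_const (μ := μ) (At *ᵥ xb)
  have hd := integrable_const (μ := μ) (Bt *ᵥ vb)
  simp only [hZ]
  rw [integral_add (((hA.fun_add hc).fun_add hB).fun_add hd) (hindG.integrable_smul hω hG),
    hnoise, integral_add ((hA.fun_add hc).fun_add hB) hd, integral_add (hA.fun_add hc) hB,
    integral_add hA hc, integral_mulVec A hX, integral_mulVec B hV]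
  simp only [integral_const, probReal_univ, one_smul, add_mulVec, add_zero]
  abel

theorem sub_integral_eq_of_mf_step (hX : Integrable X μ) (hV : Integrable V μ)
    (hω : Integrable ω μ) (hind : IndepFun (fun a => (X a, V a)) ω μ) (hω0 : ∫ a, ω a ∂μ = 0)
    (hZ : ∀ a, Z a = A *ᵥ X a + At *ᵥ (∫ b, X b ∂μ) + B *ᵥ V a + Bt *ᵥ (∫ b, V b ∂μ)
      + ω a • (C *ᵥ X a + Ct *ᵥ (∫ b, X b ∂μ) + D *ᵥ V a + Dt *ᵥ (∫ b, V b ∂μ))) (a : Ω) :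
    Z a - ∫ b, Z b ∂μ = (A *ᵥ (X a - ∫ b, X b ∂μ) + B *ᵥ (V a - ∫ b, V b ∂μ))
      + ω a • (C *ᵥ (X a - ∫ b, X b ∂μ) + D *ᵥ (V a - ∫ b, V b ∂μ)
        + ((C + Ct) *ᵥ (∫ b, X b ∂μ) + (D + Dt) *ᵥ (∫ b, V b ∂μ))) := by
  rw [hZ a, integral_eq_of_mf_step A At C Ct B Bt D Dt hX hV hω hind hω0 hZ]
  simp only [mulVec_sub, add_mulVec]
  module

theorem integral_centered_dotProduct_mulVec_of_mf_step (hX : MemLp X 2 μ) (hV : MemLp V 2 μ)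
    (hω : MemLp ω 2 μ) (hind : IndepFun (fun a => (X a, V a)) ω μ)
    (hω0 : ∫ a, ω a ∂μ = 0) (hω1 : ∫ a, ω a ^ 2 ∂μ = 1)
    (hZ : ∀ a, Z a = A *ᵥ X a + At *ᵥ (∫ b, X b ∂μ) + B *ᵥ V a + Bt *ᵥ (∫ b, V b ∂μ)
      + ω a • (C *ᵥ X a + Ct *ᵥ (∫ b, X b ∂μ) + D *ᵥ V a + Dt *ᵥ (∫ b, V b ∂μ)))
    (P P' : Matrix ι ι ℝ) (hP' : P'.IsSymm) :
    (∫ a, (Z a - ∫ b, Z b ∂μ) ⬝ᵥ P' *ᵥ (Z a - ∫ b, Z b ∂μ) ∂μ)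
    - (∫ a, (X a - ∫ b, X b ∂μ) ⬝ᵥ P *ᵥ (X a - ∫ b, X b ∂μ) ∂μ)
    = (∫ a,
        ((X a - ∫ b, X b ∂μ) ⬝ᵥ (Aᵀ * P' * A + Cᵀ * P' * C - P) *ᵥ (X a - ∫ b, X b ∂μ)
        + 2 * ((X a - ∫ b, X b ∂μ) ⬝ᵥ (Aᵀ * P' * B + Cᵀ * P' * D) *ᵥ (V a - ∫ b, V b ∂μ))
        + (V a - ∫ b, V b ∂μ) ⬝ᵥ (Bᵀ * P' * B + Dᵀ * P' * D) *ᵥ (V a - ∫ b, V b ∂μ)) ∂μ)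
      + (∫ b, X b ∂μ) ⬝ᵥ ((C + Ct)ᵀ * P' * (C + Ct)) *ᵥ (∫ b, X b ∂μ)
      + 2 * ((∫ b, X b ∂μ) ⬝ᵥ ((C + Ct)ᵀ * P' * (D + Dt)) *ᵥ (∫ b, V b ∂μ))
      + (∫ b, V b ∂μ) ⬝ᵥ ((D + Dt)ᵀ * P' * (D + Dt)) *ᵥ (∫ b, V b ∂μ) := by
  simp only [sub_integral_eq_of_mf_step A At C Ct B Bt D Dt (hX.integrable one_le_two)
    (hV.integrable one_le_two) (hω.integrable one_le_two) hind hω0 hZ]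
  set xb := ∫ b, X b ∂μ
  set vb := ∫ b, V b ∂μ
  set y := fun a => X a - xb
  set w := fun a => V a - vb
  set m := (C + Ct) *ᵥ xb + (D + Dt) *ᵥ vb
  have hy : MemLp y 2 μ := hX.sub (memLp_const xb)
  have hw : MemLp w 2 μ := hV.sub (memLp_const vb)
  have hH : MemLp (fun a => C *ᵥ y a + D *ᵥ w a) 2 μ := (hy.mulVec C).add (hw.mulVec D)
  have hU : MemLp (fun a => A *ᵥ y a + B *ᵥ w a) 2 μ := (hy.mulVec A).add (hw.mulVec B)
  have hG : MemLp (fun a => C *ᵥ y a + D *ᵥ w a + m) 2 μ := hH.add (memLp_const m)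
  have hH0 : ∫ a, C *ᵥ y a + D *ᵥ w a ∂μ = 0 := by
    rw [integral_add ((hy.integrable one_le_two).mulVec C) ((hw.integrable one_le_two).mulVec D),
      integral_mulVec C (hy.integrable one_le_two), integral_mulVec D (hw.integrable one_le_two),
      integral_sub_integral (hX.integrable one_le_two),
      integral_sub_integral (hV.integrable one_le_two), mulVec_zero, mulVec_zero, add_zero]
  have hindUG : IndepFun (fun a => (A *ᵥ y a + B *ᵥ w a, C *ᵥ y a + D *ᵥ w a + m)) ω μ :=
    hind.comp (φ := fun p : (ι → ℝ) × (κ → ℝ) =>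
      (A *ᵥ (p.1 - xb) + B *ᵥ (p.2 - vb), C *ᵥ (p.1 - xb) + D *ᵥ (p.2 - vb) + m))
      (by fun_prop) measurable_id
  rw [integral_dotProduct_mulVec_add_smul_of_indepFun P' hU hG hω hindUG hω0 hω1,
    integral_add_const_dotProduct_mulVec_add_const P' hH hH0]
  have hrhs : ∫ a, (y a ⬝ᵥ (Aᵀ * P' * A + Cᵀ * P' * C - P) *ᵥ y a
        + 2 * (y a ⬝ᵥ (Aᵀ * P' * B + Cᵀ * P' * D) *ᵥ w a)
        + w a ⬝ᵥ (Bᵀ * P' * B + Dᵀ * P' * D) *ᵥ w a) ∂μ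
      = ∫ a, (A *ᵥ y a + B *ᵥ w a) ⬝ᵥ P' *ᵥ (A *ᵥ y a + B *ᵥ w a) ∂μ
        + ∫ a, (C *ᵥ y a + D *ᵥ w a) ⬝ᵥ P' *ᵥ (C *ᵥ y a + D *ᵥ w a) ∂μ
        - ∫ a, y a ⬝ᵥ P *ᵥ y a ∂μ := by
    rw [← integral_add (hU.integrable_dotProduct_mulVec P' hU)
      (hH.integrable_dotProduct_mulVec P' hH),
      ← integral_sub ((hU.integrable_dotProduct_mulVec P' hU).fun_add
        (hH.integrable_dotProduct_mulVec P' hH)) (hy.integrable_dotProduct_mulVec P hy)]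
    congr 1 with a
    rw [hP'.mulVec_add_mulVec_dotProduct_mulVec, hP'.mulVec_add_mulVec_dotProduct_mulVec]
    simp only [add_mulVec, sub_mulVec, dotProduct_add, dotProduct_sub]
    ring
  rw [hrhs, show m ⬝ᵥ P' *ᵥ m = _ from
    hP'.mulVec_add_mulVec_dotProduct_mulVec (C + Ct) (D + Dt) xb vb]
  ring

theorem memLp_of_mf_step (hX : MemLp X 2 μ) (hV : MemLp V 2 μ) (hω : MemLp ω 2 μ)
    (hind : IndepFun (fun a => (X a, V a)) ω μ)
    (hZ : ∀ a, Z a = A *ᵥ X a + At *ᵥ (∫ b, X b ∂μ) + B *ᵥ V a + Bt *ᵥ (∫ b, V b ∂μ)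
      + ω a • (C *ᵥ X a + Ct *ᵥ (∫ b, X b ∂μ) + D *ᵥ V a + Dt *ᵥ (∫ b, V b ∂μ))) :
    MemLp Z 2 μ := by
  have hindG : IndepFun (fun a => C *ᵥ X a + Ct *ᵥ (∫ b, X b ∂μ) + D *ᵥ V a
      + Dt *ᵥ (∫ b, V b ∂μ)) ω μ :=
    hind.comp (φ := fun p : (ι → ℝ) × (κ → ℝ) =>
      C *ᵥ p.1 + Ct *ᵥ (∫ b, X b ∂μ) + D *ᵥ p.2 + Dt *ᵥ (∫ b, V b ∂μ))
      (by fun_prop) measurable_id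
  have hG : MemLp (fun a => C *ᵥ X a + Ct *ᵥ (∫ b, X b ∂μ) + D *ᵥ V a
      + Dt *ᵥ (∫ b, V b ∂μ)) 2 μ :=
    (((hX.mulVec C).add (memLp_const _)).add (hV.mulVec D)).add (memLp_const _)
  rw [funext hZ]
  exact ((((hX.mulVec A).add (memLp_const _)).add (hV.mulVec B)).add (memLp_const _)).add
    (hω.smul_of_indepFun hG hindG)

end Step

theorem mfState_memLp {Ω : Type*} [MeasurableSpace Ω] {μ : Measure Ω} [IsProbabilityMeasure μ]
    {n l : ℕ} (K : ℕ) (A At C Ct : ℕ → Matrix (Fin n) (Fin n) ℝ)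
    (B Bt D Dt : ℕ → Matrix (Fin n) (Fin l) ℝ) (W : ℕ → Ω → ℝ) (x0 : Fin n → ℝ)
    (ν : ℕ → Ω → Fin l → ℝ) (hW : ∀ k ≤ K, MemLp (W k) 2 μ) (hν : ∀ k ≤ K, MemLp (ν k) 2 μ)
    (hind : ∀ k ≤ K,
      IndepFun (fun a => (mfState μ A At C Ct B Bt D Dt W x0 ν k a, ν k a)) (W k) μ) :
    ∀ k ≤ K, MemLp (mfState μ A At C Ct B Bt D Dt W x0 ν k) 2 μ
  | 0, _ => memLp_const x0
  | k + 1, hk =>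
    memLp_of_mf_step (A k) (At k) (C k) (Ct k) (B k) (Bt k) (D k) (Dt k)
      (mfState_memLp K A At C Ct B Bt D Dt W x0 ν hW hν hind k (by omega)) (hν k (by omega))
      (hW k (by omega)) (hind k (by omega)) fun _ => rfl

theorem mf_one_step_identity_general {Ω : Type*} [MeasurableSpace Ω]
    (μ : Measure Ω) [IsProbabilityMeasure μ]
    (K n l : ℕ)
    (A At C Ct : ℕ → Matrix (Fin n) (Fin n) ℝ)
    (B Bt D Dt : ℕ → Matrix (Fin n) (Fin l) ℝ)
    (W : ℕ → Ω → ℝ)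
    (hW2 : ∀ k ≤ K, MemLp (W k) 2 μ)
    (hWmean : ∀ k ≤ K, ∫ a, W k a ∂μ = 0)
    (hWcov : ∀ s ≤ K, ∀ t ≤ K, ∫ a, W s a * W t a ∂μ = if s = t then (1:ℝ) else 0)
    (x0 : Fin n → ℝ) (ν : ℕ → Ω → Fin l → ℝ)
    (x : ℕ → Ω → Fin n → ℝ)
    (hx : x = mfState μ A At C Ct B Bt D Dt W x0 ν)
    (hadm : mfAdmissible μ K W x ν)
    (k : ℕ) (hk : k ≤ K)
    (Pk Pk1 : Matrix (Fin n) (Fin n) ℝ) (hPk1 : Pk1.IsSymm) :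
    (∫ a, (x (k+1) a - ∫ b, x (k+1) b ∂μ) ⬝ᵥ Pk1 *ᵥ (x (k+1) a - ∫ b, x (k+1) b ∂μ) ∂μ)
    - (∫ a, (x k a - ∫ b, x k b ∂μ) ⬝ᵥ Pk *ᵥ (x k a - ∫ b, x k b ∂μ) ∂μ)
    = (∫ a,
        ((x k a - ∫ b, x k b ∂μ) ⬝ᵥ
            ((A k)ᵀ * Pk1 * A k + (C k)ᵀ * Pk1 * C k - Pk) *ᵥ (x k a - ∫ b, x k b ∂μ)
        + 2 * ((x k a - ∫ b, x k b ∂μ) ⬝ᵥ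
            ((A k)ᵀ * Pk1 * B k + (C k)ᵀ * Pk1 * D k) *ᵥ (ν k a - ∫ b, ν k b ∂μ))
        + (ν k a - ∫ b, ν k b ∂μ) ⬝ᵥ
            ((B k)ᵀ * Pk1 * B k + (D k)ᵀ * Pk1 * D k) *ᵥ (ν k a - ∫ b, ν k b ∂μ)) ∂μ)
      + (∫ b, x k b ∂μ) ⬝ᵥ ((C k + Ct k)ᵀ * Pk1 * (C k + Ct k)) *ᵥ (∫ b, x k b ∂μ)
      + 2 * ((∫ b, x k b ∂μ) ⬝ᵥ ((C k + Ct k)ᵀ * Pk1 * (D k + Dt k)) *ᵥ (∫ b, ν k b ∂μ))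
      + (∫ b, ν k b ∂μ) ⬝ᵥ ((D k + Dt k)ᵀ * Pk1 * (D k + Dt k)) *ᵥ (∫ b, ν k b ∂μ) := by
  obtain ⟨hν, hind⟩ := hadm
  subst hx
  exact integral_centered_dotProduct_mulVec_of_mf_step (A k) (At k) (C k) (Ct k) (B k) (Bt k) (D k)
    (Dt k) (mfState_memLp K A At C Ct B Bt D Dt W x0 ν hW2 hν hind k hk) (hν k hk) (hW2 k hk)
    (hind k hk) (hWmean k hk) (by simpa [sq] using hWcov k hk k hk) (fun _ => rfl) Pk Pk1 hPk1

/-- equation (2.4) of the paper.  One-step identity for the centered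
second moment of the mean-field state. -/
theorem mf_one_step_identity {Ω : Type*} [MeasurableSpace Ω]
    (μ : Measure Ω) [IsProbabilityMeasure μ]
    (K n l : ℕ)
    (A At C Ct : ℕ → Matrix (Fin n) (Fin n) ℝ)
    (B Bt D Dt : ℕ → Matrix (Fin n) (Fin l) ℝ)
    (W : ℕ → Ω → ℝ)
    (hW2 : ∀ k ≤ K, MemLp (W k) 2 μ)
    (hWmean : ∀ k ≤ K, ∫ a, W k a ∂μ = 0)
    (hWcov : ∀ s ≤ K, ∀ t ≤ K, ∫ a, W s a * W t a ∂μ = if s = t then (1:ℝ) else 0)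
    (x0 : Fin n → ℝ) (ν : ℕ → Ω → Fin l → ℝ)
    (x : ℕ → Ω → Fin n → ℝ)
    (hx : x = mfState μ A At C Ct B Bt D Dt W x0 ν)
    (hadm : mfAdmissible μ K W x ν)
    (k : ℕ) (hk : k ≤ K)
    (Pk Pk1 : Matrix (Fin n) (Fin n) ℝ) (hPk : Pk.IsSymm) (hPk1 : Pk1.IsSymm) :
    (∫ a, (x (k+1) a - ∫ b, x (k+1) b ∂μ) ⬝ᵥ Pk1 *ᵥ (x (k+1) a - ∫ b, x (k+1) b ∂μ) ∂μ)
    - (∫ a, (x k a - ∫ b, x k b ∂μ) ⬝ᵥ Pk *ᵥ (x k a - ∫ b, x k b ∂μ) ∂μ)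
    = (∫ a,
        ((x k a - ∫ b, x k b ∂μ) ⬝ᵥ
            ((A k)ᵀ * Pk1 * A k + (C k)ᵀ * Pk1 * C k - Pk) *ᵥ (x k a - ∫ b, x k b ∂μ)
        + 2 * ((x k a - ∫ b, x k b ∂μ) ⬝ᵥ
            ((A k)ᵀ * Pk1 * B k + (C k)ᵀ * Pk1 * D k) *ᵥ (ν k a - ∫ b, ν k b ∂μ))
        + (ν k a - ∫ b, ν k b ∂μ) ⬝ᵥ
            ((B k)ᵀ * Pk1 * B k + (D k)ᵀ * Pk1 * D k) *ᵥ (ν k a - ∫ b, ν k b ∂μ)) ∂μ)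
      + (∫ b, x k b ∂μ) ⬝ᵥ ((C k + Ct k)ᵀ * Pk1 * (C k + Ct k)) *ᵥ (∫ b, x k b ∂μ)
      + 2 * ((∫ b, x k b ∂μ) ⬝ᵥ ((C k + Ct k)ᵀ * Pk1 * (D k + Dt k)) *ᵥ (∫ b, ν k b ∂μ))
      + (∫ b, ν k b ∂μ) ⬝ᵥ ((D k + Dt k)ᵀ * Pk1 * (D k + Dt k)) *ᵥ (∫ b, ν k b ∂μ) :=
  mf_one_step_identity_general μ K n l A At C Ct B Bt D Dt W hW2 hWmean hWcov x0 ν x hx hadm k hk Pk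
    Pk1 hPk1
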